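/- arXiv:1904.06459 — 2 statements merged into one kernel-verified Lean document; each statement's English description precedes it below -/
import Mathlib

section
/- Let f : X → Y be a smooth map of smooth manifolds with constant rank, y ∈ f(X), and suppose f⁻¹({y}) is connected. Define a relation on f⁻¹({y}): x ∼ x′ iff for all open neighborhoods O_x of x and O_{x′} of x′ there exist open sub-neighborhoods U_x ⊆ O_x, U_{x′} ⊆ O_{x′} with f(U_x) = f(U_{x′}). Then ∼ is an equivalence relation, each equivalence class is open in f⁻¹({y}), and hence (by connectedness) there is exactly one equivalence class. -/
/-!
By the constant rank theorem every point has a chart `Φ = (Φ₁, Φ₂)` into a product in which the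
fibers of `f` are the slices `Φ₁ = const`. In coordinates, with `g` the local expression of `f`,
take `Φ x = (P (g x), Q x)` where `P` and `Q` are the orthogonal projections onto the range and the
kernel of `Dg` at the centre: `Φ` is a local diffeomorphism, and since `P ∘ g ∘ Φ⁻¹` is the first
projection while `g ∘ Φ⁻¹` still has rank `r = dim (range P)`, `g ∘ Φ⁻¹` does not depend on the
second coordinate.

In such a chart `f '' U` only depends on `Φ₁ '' U`, so a small open set `U` around one fiber point
can be replaced by `Φ⁻¹ (Φ₁ '' U × V)`, with `V` a small neighbourhood of the second coordinate of
any other fiber point in the chart, without changing its image. Hence the class of a fiber point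
is locally constant along the fiber, and the connected fiber is a single class.
-/

open Set Module Manifold Topology

section LocalImages

variable {X Y Z₁ Z₂ : Type*} [TopologicalSpace X] [TopologicalSpace Z₁] [TopologicalSpace Z₂]

def LocallyImageEquivalent (f : X → Y) (a b : X) : Prop :=
  ∀ Oa Ob : Set X, IsOpen Oa → IsOpen Ob → a ∈ Oa → b ∈ Ob →
    ∃ Ua Ub : Set X, IsOpen Ua ∧ IsOpen Ub ∧ a ∈ Ua ∧ b ∈ Ub ∧
      Ua ⊆ Oa ∧ Ub ⊆ Ob ∧ f '' Ua = f '' Ub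

theorem locallyImageEquivalent_refl (f : X → Y) (a : X) : LocallyImageEquivalent f a a :=
  fun Oa Ob hOa hOb ha hb => ⟨Oa ∩ Ob, Oa ∩ Ob, hOa.inter hOb, hOa.inter hOb, ⟨ha, hb⟩, ⟨ha, hb⟩,
    inter_subset_left, inter_subset_right, rfl⟩

theorem locallyImageEquivalent_of_isPreconnected {f : X → Y} {S : Set X} (hS : IsPreconnected S)
    (hloc : ∀ c ∈ S, ∀ᶠ b in 𝓝[S] c,
      ∀ a, LocallyImageEquivalent f a c ↔ LocallyImageEquivalent f a b)
    {a b : X} (ha : a ∈ S) (hb : b ∈ S) : LocallyImageEquivalent f a b :=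
  (hS.induction₂ (fun x y => ∀ a, LocallyImageEquivalent f a x ↔ LocallyImageEquivalent f a y)
    hloc (fun _ _ _ _ _ _ hxy hyz a => (hxy a).trans (hyz a)) (fun _ _ _ _ h a => (h a).symm)
    ha hb a).mp (locallyImageEquivalent_refl f a)

def IsFiberChart (f : X → Y) (Φ : OpenPartialHomeomorph X (Z₁ × Z₂)) : Prop :=
  ∀ x ∈ Φ.source, ∀ x' ∈ Φ.source, f x = f x' ↔ (Φ x).1 = (Φ x').1

namespace IsFiberChart

variable {f : X → Y} {Φ : OpenPartialHomeomorph X (Z₁ × Z₂)}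

theorem image_eq_image_of_fst {U U' : Set X} (hΦ : IsFiberChart f Φ) (hU : U ⊆ Φ.source)
    (hU' : U' ⊆ Φ.source) (h : Prod.fst '' (Φ '' U) = Prod.fst '' (Φ '' U')) :
    f '' U = f '' U' := by
  have key : ∀ {U U' : Set X}, U ⊆ Φ.source → U' ⊆ Φ.source →
      Prod.fst '' (Φ '' U) ⊆ Prod.fst '' (Φ '' U') → f '' U ⊆ f '' U' := by
    rintro U U' hU hU' h _ ⟨x, hx, rfl⟩
    obtain ⟨_, ⟨x', hx', rfl⟩, hfst⟩ := h ⟨Φ x, mem_image_of_mem Φ hx, rfl⟩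
    exact ⟨x', hx', (hΦ x' (hU' hx') x (hU hx)).mpr hfst⟩
  exact (key hU hU' h.le).antisymm (key hU' hU h.ge)

theorem locallyImageEquivalent {a b b' : X} (hΦ : IsFiberChart f Φ) (hb : b ∈ Φ.source)
    (hb' : b' ∈ Φ.source) (hbb' : f b = f b') (h : LocallyImageEquivalent f a b) :
    LocallyImageEquivalent f a b' := by
  intro Oa Ob' hOa hOb' haOa hb'Ob'
  obtain ⟨P, Q, hP, hQ, hb'P, hb'Q, hPQ⟩ := isOpen_prod_iff.mp
    (Φ.isOpen_image_of_subset_source (hOb'.inter Φ.open_source) inter_subset_right)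
    (Φ b').1 (Φ b').2 (mem_image_of_mem Φ ⟨hb'Ob', hb'⟩)
  have hfst : (Φ b).1 = (Φ b').1 := (hΦ b hb b' hb').mp hbb'
  obtain ⟨Ua, U, hUa, hU, haUa, hbU, hUaOa, hUN, himg⟩ :=
    h Oa (Φ.source ∩ Φ ⁻¹' (P ×ˢ univ)) hOa (Φ.isOpen_inter_preimage (hP.prod isOpen_univ))
      haOa ⟨hb, by simpa [hfst] using hb'P⟩
  set A := Prod.fst '' (Φ '' U)
  have hA : IsOpen A :=
    isOpenMap_fst _ (Φ.isOpen_image_of_subset_source hU (hUN.trans inter_subset_left))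
  have hAP : A ⊆ P := by
    rintro _ ⟨_, ⟨x, hx, rfl⟩, rfl⟩
    exact (hUN hx).2.1
  have hAQ : ∀ z ∈ A ×ˢ Q, ∃ x ∈ Ob' ∩ Φ.source, Φ x = z :=
    fun z hz => hPQ ⟨hAP hz.1, hz.2⟩
  refine ⟨Ua, Φ.source ∩ Φ ⁻¹' (A ×ˢ Q), hUa, Φ.isOpen_inter_preimage (hA.prod hQ), haUa,
    ⟨hb', ⟨Φ b, mem_image_of_mem Φ hbU, hfst⟩, hb'Q⟩, hUaOa, ?_, ?_⟩
  · rintro x ⟨hx, hxAQ⟩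
    obtain ⟨x', ⟨hx'O, hx'⟩, hx'x⟩ := hAQ _ hxAQ
    rwa [← Φ.injOn hx' hx hx'x]
  · refine himg.trans (hΦ.image_eq_image_of_fst (hUN.trans inter_subset_left)
      inter_subset_left (Subset.antisymm ?_ ?_))
    · intro u hu
      obtain ⟨x, ⟨_, hx⟩, hxu⟩ := hAQ (u, (Φ b').2) ⟨hu, hb'Q⟩
      exact ⟨Φ x, mem_image_of_mem Φ ⟨hx, by simpa [hxu] using ⟨hu, hb'Q⟩⟩, by simp [hxu]⟩
    · rintro _ ⟨_, ⟨x, hx, rfl⟩, rfl⟩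
      exact hx.2.1

theorem eventually_locallyImageEquivalent_iff {c : X} {y : Y} (hΦ : IsFiberChart f Φ)
    (hc : c ∈ Φ.source) (hcy : f c = y) :
    ∀ᶠ b in 𝓝[f ⁻¹' {y}] c, ∀ a, LocallyImageEquivalent f a c ↔ LocallyImageEquivalent f a b := by
  filter_upwards [nhdsWithin_le_nhds (Φ.open_source.mem_nhds hc), self_mem_nhdsWithin]
    with b hb hby a
  have hcb : f c = f b := hcy.trans hby.symm
  exact ⟨hΦ.locallyImageEquivalent hc hb hcb, hΦ.locallyImageEquivalent hb hc hcb.symm⟩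

end IsFiberChart

end LocalImages

theorem LinearMap.finrank_range_comp_comp {K V₁ V₂ V₃ V₄ : Type*} [Field K]
    [AddCommGroup V₁] [Module K V₁] [AddCommGroup V₂] [Module K V₂] [AddCommGroup V₃] [Module K V₃]
    [AddCommGroup V₄] [Module K V₄] {A : V₃ →ₗ[K] V₄} {T : V₂ →ₗ[K] V₃} {B : V₁ →ₗ[K] V₂}
    (hA : Function.Injective A) (hB : Function.Surjective B) :
    finrank K (range (A ∘ₗ T ∘ₗ B)) = finrank K (range T) := by
  rw [LinearMap.range_comp, LinearMap.range_comp_of_range_eq_top _ (LinearMap.range_eq_top.mpr hB)]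
  exact (Submodule.equivMapOfInjective A hA _).finrank_eq.symm

theorem LinearMap.comp_inr_eq_zero_of_fst {K M N F : Type*} [Field K]
    [AddCommGroup M] [Module K M] [AddCommGroup N] [Module K N] [AddCommGroup F] [Module K F]
    [FiniteDimensional K F] {T : M × N →ₗ[K] F} {p : F →ₗ[K] M}
    (hfst : p ∘ₗ T = LinearMap.fst K M N) (hrank : finrank K (range T) = finrank K M) :
    T ∘ₗ LinearMap.inr K M N = 0 := by
  have hsurj : Function.Surjective (p ∘ₗ (range T).subtype) := fun m =>
    ⟨⟨T (m, 0), mem_range_self T _⟩, by simpa using LinearMap.congr_fun hfst (m, 0)⟩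
  have : FiniteDimensional K M := Module.Finite.of_surjective _ hsurj
  have hinj := (injective_iff_surjective_of_finrank_eq_finrank hrank).mpr hsurj
  ext η
  have : p (T (0, η)) = p 0 := by simpa using LinearMap.congr_fun hfst (0, η)
  simpa using congrArg Subtype.val (@hinj ⟨T (0, η), mem_range_self T _⟩ 0 (by simpa using this))

theorem ContinuousLinearMap.bijective_orthogonalProjectionOnto_range_prod_ker
    {E F : Type*} [NormedAddCommGroup E] [InnerProductSpace ℝ E] [FiniteDimensional ℝ E]
    [NormedAddCommGroup F] [InnerProductSpace ℝ F] (L : E →L[ℝ] F) :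
    Function.Bijective (((LinearMap.range (L : E →ₗ[ℝ] F)).orthogonalProjectionOnto ∘L L).prod
      (LinearMap.ker (L : E →ₗ[ℝ] F)).orthogonalProjectionOnto) := by
  set R := LinearMap.range (L : E →ₗ[ℝ] F)
  set K := LinearMap.ker (L : E →ₗ[ℝ] F)
  have hinj : Function.Injective ((R.orthogonalProjectionOnto ∘L L).prod
      K.orthogonalProjectionOnto) := by
    refine (injective_iff_map_eq_zero _).mpr fun v hv => ?_
    simp only [ContinuousLinearMap.prod_apply, ContinuousLinearMap.comp_apply, Prod.mk_eq_zero,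
      Submodule.orthogonalProjectionOnto_eq_zero_iff] at hv
    have hLv : L v = 0 := R.orthogonal_disjoint.le_bot ⟨LinearMap.mem_range_self _ v, hv.1⟩
    exact K.orthogonal_disjoint.le_bot ⟨hLv, hv.2⟩
  refine ⟨hinj, (LinearMap.injective_iff_surjective_of_finrank_eq_finrank ?_).mp hinj⟩
  rw [finrank_prod]
  exact (LinearMap.finrank_range_add_finrank_ker (L : E →ₗ[ℝ] F)).symm

section Calculus

variable {E M N F : Type*} [NormedAddCommGroup E] [NormedSpace ℝ E]
  [NormedAddCommGroup M] [NormedSpace ℝ M] [NormedAddCommGroup N] [NormedSpace ℝ N]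
  [NormedAddCommGroup F] [NormedSpace ℝ F]

theorem OpenPartialHomeomorph.hasFDerivAt_comp_symm_snd_eq_zero [FiniteDimensional ℝ F]
    (Φ : OpenPartialHomeomorph E (M × N)) {g : E → F} {p : F →L[ℝ] M}
    (hfst : ∀ w ∈ Φ.target, p (g (Φ.symm w)) = w.1) {z : M × N} (hz : z ∈ Φ.target)
    {e : E ≃L[ℝ] M × N} (hΦ : HasFDerivAt Φ (e : E →L[ℝ] M × N) (Φ.symm z))
    {g' : E →L[ℝ] F} (hg : HasFDerivAt g g' (Φ.symm z))
    (hrank : finrank ℝ (LinearMap.range (g' : E →ₗ[ℝ] F)) = finrank ℝ M) :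
    HasFDerivAt (fun t => g (Φ.symm (z.1, t))) (0 : N →L[ℝ] F) z.2 := by
  set T : M × N →L[ℝ] F := g' ∘L (e.symm : M × N →L[ℝ] E)
  have hT : HasFDerivAt (g ∘ Φ.symm) T z := hg.comp z (Φ.hasFDerivAt_symm hz hΦ)
  have hpT : p ∘L T = ContinuousLinearMap.fst ℝ M N :=
    (p.hasFDerivAt.comp z hT).unique <| hasFDerivAt_fst.congr_of_eventuallyEq <|
      Filter.mem_of_superset (Φ.open_target.mem_nhds hz) fun w hw => hfst w hw
  have hTrank : finrank ℝ (LinearMap.range (T : M × N →ₗ[ℝ] F)) = finrank ℝ M := by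
    rw [← hrank]
    exact congrArg (fun S : Submodule ℝ F => finrank ℝ S)
      (LinearMap.range_comp_of_range_eq_top _ (LinearMap.range_eq_top.mpr e.symm.surjective))
  have hvert : T ∘L ContinuousLinearMap.inr ℝ M N = 0 := ContinuousLinearMap.coe_injective <|
    LinearMap.comp_inr_eq_zero_of_fst (congrArg ContinuousLinearMap.toLinearMap hpT) hTrank
  have := hT.comp z.2 (hasFDerivAt_prodMk_right (𝕜 := ℝ) z.1 z.2)
  rwa [hvert] at this

omit [NormedSpace ℝ M] in
theorem apply_eq_of_hasFDerivAt_snd_eq_zero {G : M × N → F} {c : M × N} {ε : ℝ}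
    (hG : ∀ z ∈ Metric.ball c ε, HasFDerivAt (fun t => G (z.1, t)) (0 : N →L[ℝ] F) z.2)
    {z z' : M × N} (hz : z ∈ Metric.ball c ε) (hz' : z' ∈ Metric.ball c ε) (h : z.1 = z'.1) :
    G z = G z' := by
  obtain ⟨u, v⟩ := z
  obtain ⟨u', v'⟩ := z'
  obtain rfl : u = u' := h
  rw [← ball_prod_same] at hz hz'
  have hslice : ∀ t ∈ Metric.ball c.2 ε, HasFDerivAt (fun t => G (u, t)) (0 : N →L[ℝ] F) t :=
    fun t ht => hG (u, t) (by rw [← ball_prod_same]; exact ⟨hz.1, ht⟩)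
  exact (convex_ball c.2 ε).is_const_of_fderivWithin_eq_zero
    (fun t ht => (hslice t ht).differentiableAt.differentiableWithinAt)
    (fun t ht => by rw [fderivWithin_of_isOpen Metric.isOpen_ball ht, (hslice t ht).fderiv])
    hz.2 hz'.2

omit [NormedSpace ℝ E] [NormedSpace ℝ M] in
theorem OpenPartialHomeomorph.isFiberChart_restrOpen_of_hasFDerivAt_snd_eq_zero
    (Φ : OpenPartialHomeomorph E (M × N)) {g : E → F} {p : F → M}
    (hfst : ∀ x ∈ Φ.source, (Φ x).1 = p (g x)) {c : M × N} {ε : ℝ}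
    (hvert : ∀ z ∈ Metric.ball c ε,
      HasFDerivAt (fun t => g (Φ.symm (z.1, t))) (0 : N →L[ℝ] F) z.2) :
    IsFiberChart g (Φ.restrOpen _ (Φ.isOpen_inter_preimage (Metric.isOpen_ball (x := c)
      (ε := ε)))) := by
  rintro x ⟨hx, -, hxc⟩ x' ⟨hx', -, hx'c⟩
  refine ⟨fun h => show (Φ x).1 = (Φ x').1 by rw [hfst x hx, hfst x' hx', h], fun h => ?_⟩
  simpa [Φ.left_inv hx, Φ.left_inv hx'] using
    apply_eq_of_hasFDerivAt_snd_eq_zero (G := fun z => g (Φ.symm z)) hvert hxc hx'c h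

end Calculus

section ConstantRank

variable {E F : Type*} [NormedAddCommGroup E] [InnerProductSpace ℝ E] [FiniteDimensional ℝ E]
  [NormedAddCommGroup F] [InnerProductSpace ℝ F] [FiniteDimensional ℝ F]

theorem exists_isFiberChart_of_finrank_range_fderiv {g : E → F} {s : Set E} {a : E} {r : ℕ}
    (hs : IsOpen s) (hg : ContDiffOn ℝ 1 g s) (ha : a ∈ s)
    (hrank : ∀ x ∈ s, finrank ℝ (LinearMap.range (fderiv ℝ g x : E →ₗ[ℝ] F)) = r) :
    ∃ Φ : OpenPartialHomeomorph E
      (LinearMap.range (fderiv ℝ g a : E →ₗ[ℝ] F) × LinearMap.ker (fderiv ℝ g a : E →ₗ[ℝ] F)),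
      a ∈ Φ.source ∧ Φ.source ⊆ s ∧ IsFiberChart g Φ := by
  set L := fderiv ℝ g a
  set R := LinearMap.range (L : E →ₗ[ℝ] F)
  set K := LinearMap.ker (L : E →ₗ[ℝ] F)
  set α : E → R × K := fun x => (R.orthogonalProjectionOnto (g x), K.orthogonalProjectionOnto x)
  have hα : ContDiffOn ℝ 1 α s :=
    (R.orthogonalProjectionOnto.contDiff.comp_contDiffOn hg).prodMk
      K.orthogonalProjectionOnto.contDiff.contDiffOn
  have hgd : ∀ x ∈ s, HasFDerivAt g (fderiv ℝ g x) x := fun x hx =>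
    ((hg.differentiableOn one_ne_zero x hx).differentiableAt (hs.mem_nhds hx)).hasFDerivAt
  let e₀ := (LinearEquiv.ofBijective _ L.bijective_orthogonalProjectionOnto_range_prod_ker
    ).toContinuousLinearEquiv
  have hαa : HasFDerivAt α (e₀ : E →L[ℝ] R × K) a :=
    (R.orthogonalProjectionOnto.hasFDerivAt.comp a (hgd a ha)).prodMk
      K.orthogonalProjectionOnto.hasFDerivAt
  set Φ₀ := (hα.contDiffAt (hs.mem_nhds ha)).toOpenPartialHomeomorph α hαa one_ne_zero
  have haΦ₀ : a ∈ Φ₀.source := ContDiffAt.mem_toOpenPartialHomeomorph_source _ _ _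
  have hfst : ∀ w ∈ Φ₀.target, R.orthogonalProjectionOnto (g (Φ₀.symm w)) = w.1 :=
    fun w hw => congrArg Prod.fst (Φ₀.right_inv hw)
  -- `Φ₀.symm` is differentiable wherever `fderiv ℝ α` is invertible
  set s₂ := s ∩ fderiv ℝ α ⁻¹' range ((↑) : (E ≃L[ℝ] R × K) → E →L[ℝ] R × K)
  have hs₂ : IsOpen s₂ := (hα.continuousOn_fderiv_of_isOpen hs le_rfl).isOpen_inter_preimage hs
    ContinuousLinearEquiv.isOpen
  obtain ⟨ε, hε, hball⟩ := Metric.isOpen_iff.mp (Φ₀.isOpen_inter_preimage_symm hs₂) (Φ₀ a)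
    ⟨Φ₀.map_source haΦ₀, by simpa [Φ₀.left_inv haΦ₀] using ⟨ha, e₀, hαa.fderiv.symm⟩⟩
  have hvert : ∀ z ∈ Metric.ball (Φ₀ a) ε,
      HasFDerivAt (fun t => g (Φ₀.symm (z.1, t))) (0 : K →L[ℝ] F) z.2 := by
    intro z hz
    obtain ⟨hzt, hzs, e, he⟩ := hball hz
    have hΦ₀ : HasFDerivAt Φ₀ (e : E →L[ℝ] R × K) (Φ₀.symm z) := by
      rw [he]
      exact (hα.differentiableOn one_ne_zero _ hzs).differentiableAt (hs.mem_nhds hzs)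
        |>.hasFDerivAt
    exact Φ₀.hasFDerivAt_comp_symm_snd_eq_zero hfst hzt hΦ₀ (hgd _ hzs)
      ((hrank _ hzs).trans (hrank a ha).symm)
  have hΦ := Φ₀.isFiberChart_restrOpen_of_hasFDerivAt_snd_eq_zero
    (p := R.orthogonalProjectionOnto) (fun _ _ => rfl) hvert
  refine ⟨_, ?_, ?_, hΦ⟩
  · exact ⟨haΦ₀, haΦ₀, Metric.mem_ball_self hε⟩
  · rintro x ⟨hx, -, hxb⟩
    simpa [Φ₀.left_inv hx] using (hball hxb).2.1

variable {X Y : Type*} [TopologicalSpace X] [ChartedSpace E X] [IsManifold 𝓘(ℝ, E) 1 X]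
  [TopologicalSpace Y] [ChartedSpace F Y] [IsManifold 𝓘(ℝ, F) 1 Y]
  {f : X → Y}

omit [FiniteDimensional ℝ E] [FiniteDimensional ℝ F] in
theorem finrank_range_fderiv_chartAt_comp (hf : ContMDiff 𝓘(ℝ, E) 𝓘(ℝ, F) 1 f) (c : X) {u : E}
    (hu : u ∈ (chartAt E c).target ∩ (chartAt E c).symm ⁻¹' (f ⁻¹' (chartAt F (f c)).source)) :
    finrank ℝ (LinearMap.range
        (fderiv ℝ (chartAt F (f c) ∘ f ∘ (chartAt E c).symm) u : E →ₗ[ℝ] F)) =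
      finrank ℝ (LinearMap.range
        (mfderiv 𝓘(ℝ, E) 𝓘(ℝ, F) f ((chartAt E c).symm u)).toLinearMap) := by
  have hφ := mdifferentiableAt_atlas_symm (I := 𝓘(ℝ, E)) (chart_mem_atlas E c) hu.1
  have hψ := mdifferentiableAt_atlas (I := 𝓘(ℝ, F)) (chart_mem_atlas F (f c)) hu.2
  rw [← mfderiv_eq_fderiv, mfderiv_comp u hψ ((hf.mdifferentiableAt one_ne_zero).comp u hφ),
    mfderiv_comp u (hf.mdifferentiableAt one_ne_zero) hφ]
  exact LinearMap.finrank_range_comp_comp ((mdifferentiable_chart (f c)).mfderiv_injective hu.2)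
    ((mdifferentiable_chart c).symm.mfderiv_surjective hu.1)

theorem exists_isFiberChart_of_finrank_range_mfderiv {r : ℕ}
    (hf : ContMDiff 𝓘(ℝ, E) 𝓘(ℝ, F) 1 f)
    (hrank : ∀ x, finrank ℝ (LinearMap.range (mfderiv 𝓘(ℝ, E) 𝓘(ℝ, F) f x).toLinearMap) = r)
    (c : X) :
    ∃ (R : Submodule ℝ F) (K : Submodule ℝ E) (Φ : OpenPartialHomeomorph X (R × K)),
      c ∈ Φ.source ∧ IsFiberChart f Φ := by
  set φ := chartAt E c
  set ψ := chartAt F (f c)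
  set s := φ.target ∩ φ.symm ⁻¹' (f ⁻¹' ψ.source)
  have hs : IsOpen s := φ.isOpen_inter_preimage_symm (hf.continuous.isOpen_preimage _ ψ.open_source)
  have hcs : φ c ∈ s := ⟨φ.map_source (mem_chart_source E c), by
    simp only [mem_preimage, φ.left_inv (mem_chart_source E c)]
    exact mem_chart_source F (f c)⟩
  have hg : ContDiffOn ℝ 1 (ψ ∘ f ∘ φ.symm) s := by
    rw [← contMDiffOn_iff_contDiffOn]
    exact contMDiffOn_chart.comp
      (hf.comp_contMDiffOn (contMDiffOn_chart_symm.mono inter_subset_left)) fun u hu => hu.2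
  obtain ⟨Φ, hcΦ, hΦs, hΦ⟩ := exists_isFiberChart_of_finrank_range_fderiv hs hg hcs
    fun u hu => (finrank_range_fderiv_chartAt_comp hf c hu).trans (hrank _)
  refine ⟨_, _, φ.trans Φ, ⟨mem_chart_source E c, hcΦ⟩, ?_⟩
  have hψf : ∀ x ∈ (φ.trans Φ).source, f x ∈ ψ.source ∧ ψ (f x) = (ψ ∘ f ∘ φ.symm) (φ x) :=
    fun x hx => by simpa [φ.left_inv hx.1] using (hΦs hx.2).2
  intro x hx x' hx'
  rw [← ψ.injOn.eq_iff (hψf x hx).1 (hψf x' hx').1, (hψf x hx).2, (hψf x' hx').2]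
  exact hΦ _ hx.2 _ hx'.2

end ConstantRank

theorem fiber_equivalence_one_class_general
    {n m : ℕ} {X Y : Type*}
    [TopologicalSpace X] [ChartedSpace (EuclideanSpace ℝ (Fin n)) X]
    [IsManifold (𝓡 n) ((⊤ : ℕ∞) : WithTop ℕ∞) X]
    [TopologicalSpace Y] [ChartedSpace (EuclideanSpace ℝ (Fin m)) Y]
    [IsManifold (𝓡 m) ((⊤ : ℕ∞) : WithTop ℕ∞) Y]
    (f : X → Y) (hf : ContMDiff (𝓡 n) (𝓡 m) (⊤ : ℕ∞) f)
    (r : ℕ)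
    (hrank : ∀ x : X,
      Module.finrank ℝ (LinearMap.range (mfderiv (𝓡 n) (𝓡 m) f x).toLinearMap) = r)
    (y : Y) (hconn : IsConnected (f ⁻¹' {y}))
    (rel : (f ⁻¹' {y}) → (f ⁻¹' {y}) → Prop)
    (hrel : ∀ a b : (f ⁻¹' {y}), rel a b ↔
      ∀ Oa Ob : Set X, IsOpen Oa → IsOpen Ob → (a : X) ∈ Oa → (b : X) ∈ Ob →
        ∃ Ua Ub : Set X, IsOpen Ua ∧ IsOpen Ub ∧ (a : X) ∈ Ua ∧ (b : X) ∈ Ub ∧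
          Ua ⊆ Oa ∧ Ub ⊆ Ob ∧ f '' Ua = f '' Ub) :
    Equivalence rel ∧ (∀ a, IsOpen {b | rel a b}) ∧ ∀ a b, rel a b := by
  have hf₁ : ContMDiff (𝓡 n) (𝓡 m) 1 f := hf.of_le (by exact_mod_cast le_top)
  have hloc : ∀ c ∈ f ⁻¹' {y}, ∀ᶠ b in 𝓝[f ⁻¹' {y}] c,
      ∀ a, LocallyImageEquivalent f a c ↔ LocallyImageEquivalent f a b := fun c hc => by
    obtain ⟨_, _, Φ, hcΦ, hΦ⟩ := exists_isFiberChart_of_finrank_range_mfderiv hf₁ hrank c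
    exact hΦ.eventually_locallyImageEquivalent_iff hcΦ hc
  have hall : ∀ a b, rel a b := fun a b =>
    (hrel a b).mpr (locallyImageEquivalent_of_isPreconnected hconn.isPreconnected hloc a.2 b.2)
  refine ⟨⟨fun a => hall a a, fun _ => hall _ _, fun _ _ => hall _ _⟩, fun a => ?_, hall⟩
  rw [eq_univ_of_forall (hall a)]
  exact isOpen_univ

/-- Step 2 of the embedded-image lemma: on a connected fiber `f⁻¹(y)` of a smooth
constant-rank map, the relation "x ∼ x′ iff every pair of neighborhoods contains
sub-neighborhoods with equal images under f" is an equivalence relation with open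
classes, hence has exactly one class. -/
theorem fiber_equivalence_one_class
    {n m : ℕ} {X Y : Type*}
    [TopologicalSpace X] [ChartedSpace (EuclideanSpace ℝ (Fin n)) X]
    [IsManifold (𝓡 n) ((⊤ : ℕ∞) : WithTop ℕ∞) X]
    [TopologicalSpace Y] [ChartedSpace (EuclideanSpace ℝ (Fin m)) Y]
    [IsManifold (𝓡 m) ((⊤ : ℕ∞) : WithTop ℕ∞) Y]
    (f : X → Y) (hf : ContMDiff (𝓡 n) (𝓡 m) (⊤ : ℕ∞) f)
    (r : ℕ)
    (hrank : ∀ x : X,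
      Module.finrank ℝ (LinearMap.range (mfderiv (𝓡 n) (𝓡 m) f x).toLinearMap) = r)
    (y : Y) (hy : y ∈ Set.range f) (hconn : IsConnected (f ⁻¹' {y}))
    (rel : (f ⁻¹' {y}) → (f ⁻¹' {y}) → Prop)
    (hrel : ∀ a b : (f ⁻¹' {y}), rel a b ↔
      ∀ Oa Ob : Set X, IsOpen Oa → IsOpen Ob → (a : X) ∈ Oa → (b : X) ∈ Ob →
        ∃ Ua Ub : Set X, IsOpen Ua ∧ IsOpen Ub ∧ (a : X) ∈ Ua ∧ (b : X) ∈ Ub ∧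
          Ua ⊆ Oa ∧ Ub ⊆ Ob ∧ f '' Ua = f '' Ub) :
    Equivalence rel ∧ (∀ a, IsOpen {b | rel a b}) ∧ ∀ a b, rel a b :=
  fiber_equivalence_one_class_general f hf r hrank y hconn rel hrel
end

section
/- Let ε ∈ (0, π/4), and let u, z ∈ ℝ³ with z ≠ u, β ∈ S², φ₀ ∈ (ε, π/2 − ε), satisfying (z−u)·β = |z−u| cos φ₀. Then the three quantities d_zφ = β − ((z−u)/|z−u|) cos φ₀, d_{φ₀}φ = |z−u| sin φ₀, and the pair ((z−u)·β₁, (z−u)·β₂) (for any orthonormal completion β₁, β₂ of β) satisfy: d_zφ ≠ 0 and d_{φ₀}φ ≠ 0. In particular the conormal bundle of the incidence set {φ = 0} contains no covectors vanishing in either the z-variables or the (u,β,φ₀)-variables. -/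
open Real RealInnerProductSpace

noncomputable abbrev V3 := EuclideanSpace ℝ (Fin 3)

/-! The vector `(cos φ₀ / |z − u|) (z − u)` has length `|cos φ₀| < 1 = |β|`, so it cannot equal `β`;
and `|z − u| sin φ₀` is a product of two positive numbers, since `φ₀ ∈ (0, π)`. -/

theorem Real.abs_cos_lt_one_of_mem_Ioo {x : ℝ} (hx : x ∈ Set.Ioo 0 π) : |cos x| < 1 := by
  have hsin : 0 < sin x := sin_pos_of_mem_Ioo hx
  rw [← sq_lt_one_iff_abs_lt_one, cos_sq']
  linarith [pow_pos hsin 2]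

theorem norm_div_norm_smul_le {E : Type*} [NormedAddCommGroup E] [NormedSpace ℝ E]
    (c : ℝ) (v : E) : ‖(c / ‖v‖) • v‖ ≤ |c| := by
  rcases eq_or_ne v 0 with rfl | hv
  · simp
  · rw [norm_smul, norm_div, norm_norm, div_mul_cancel₀ _ (norm_ne_zero_iff.mpr hv),
      Real.norm_eq_abs]

theorem sub_div_norm_smul_ne_zero {E : Type*} [NormedAddCommGroup E] [NormedSpace ℝ E]
    {β : E} (hβ : ‖β‖ = 1) {c : ℝ} (hc : |c| < 1) (v : E) : β - (c / ‖v‖) • v ≠ 0 := by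
  rw [sub_ne_zero]
  rintro h
  have := norm_div_norm_smul_le c v
  rw [← h, hβ] at this
  linarith

theorem cone_lagrangian_avoids_zero_sections_general (u z β : V3) (hz : z ≠ u)
    (hβ : ‖β‖ = 1) (ε : ℝ) (hε : 0 < ε)
    (φ₀ : ℝ) (hφ : φ₀ ∈ Set.Ioo ε (π / 2 - ε)) :
    β - (Real.cos φ₀ / ‖z - u‖) • (z - u) ≠ 0 ∧
    ‖z - u‖ * Real.sin φ₀ ≠ 0 := by
  have hφ₀ : φ₀ ∈ Set.Ioo 0 π :=
    Set.Ioo_subset_Ioo hε.le (by linarith [pi_pos]) hφ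
  refine ⟨sub_div_norm_smul_ne_zero hβ (abs_cos_lt_one_of_mem_Ioo hφ₀) _, ?_⟩
  exact mul_ne_zero (norm_ne_zero_iff.mpr (sub_ne_zero.mpr hz)) (sin_pos_of_mem_Ioo hφ₀).ne'

/-- On the incidence set {φ = 0} of the cone transform with opening angles in
(ε, π/2−ε), both d_zφ = β − cos φ₀ (z−u)/|z−u| and d_{φ₀}φ = |z−u| sin φ₀ are
nonzero, so the conormal bundle of {φ = 0} contains no covectors vanishing in
either the z-variables or the (u,β,φ₀)-variables. -/
theorem cone_lagrangian_avoids_zero_sections (u z β : V3) (hz : z ≠ u)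
    (hβ : ‖β‖ = 1) (ε : ℝ) (hε : 0 < ε) (hε' : ε < π / 4)
    (φ₀ : ℝ) (hφ : φ₀ ∈ Set.Ioo ε (π / 2 - ε))
    (hcone : ⟪z - u, β⟫ = ‖z - u‖ * Real.cos φ₀) :
    β - (Real.cos φ₀ / ‖z - u‖) • (z - u) ≠ 0 ∧
    ‖z - u‖ * Real.sin φ₀ ≠ 0 :=
  cone_lagrangian_avoids_zero_sections_general u z β hz hβ ε hε φ₀ hφ
end
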